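/- arXiv:2604.10089 — 4 statements merged into one kernel-verified Lean document; each statement's English description precedes it below -/
import Mathlib

section
/- Let f(x) = (1/2)xᵀAx + bᵀx with A symmetric positive definite, x ≥ 0 componentwise, and p be a descent direction at x (pᵀ(Ax + b) < 0). Define η' = −pᵀ(Ax + b)/(pᵀAp), and for each index ℓ set η̂_ℓ = −x_ℓ/p_ℓ if p_ℓ < 0 and η̂_ℓ = +∞ otherwise. Then η* = min(η', min_ℓ η̂_ℓ) is a global minimizer of f(x + ηp) over the set {η ≥ 0 : x + ηp ≥ 0}. -/
open Matrix

/-!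
Along the ray `x + η • p` the objective is the parabola
`η ↦ f x + η c + η² a / 2` with `c = pᵀ(Ax + b) < 0` and `a = pᵀAp > 0`, whose vertex is at
`η' = -c / a > 0`. Because `x ≥ 0`, the feasible steps `η ≥ 0` form the interval from `0` to
`min_ℓ η̂_ℓ`. The parabola decreases up to its vertex, so its minimum over that interval is attained
at the point of the interval nearest to `η'`, namely `min η' (min_ℓ η̂_ℓ)`.
-/

noncomputable section

variable {ι : Type*} [Fintype ι]

def quadObjective (A : Matrix ι ι ℝ) (b z : ι → ℝ) : ℝ :=
  1 / 2 * (z ⬝ᵥ A *ᵥ z) + b ⬝ᵥ z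

theorem quadObjective_add_smul {A : Matrix ι ι ℝ} (hA : A.IsSymm) (b x p : ι → ℝ) (η : ℝ) :
    quadObjective A b (x + η • p) =
      quadObjective A b x + η * (p ⬝ᵥ (A *ᵥ x + b)) + η ^ 2 / 2 * (p ⬝ᵥ A *ᵥ p) := by
  have hsymm : x ⬝ᵥ A *ᵥ p = p ⬝ᵥ A *ᵥ x := by
    rw [dotProduct_mulVec, ← mulVec_transpose, hA.eq, dotProduct_comm]
  simp only [quadObjective, mulVec_add, mulVec_smul, dotProduct_add, add_dotProduct,
    dotProduct_smul, smul_dotProduct, smul_eq_mul, hsymm, dotProduct_comm b p]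
  ring

def maxFeasibleStep (x p : ι → ℝ) : WithTop ℝ :=
  Finset.univ.inf fun ℓ => if p ℓ < 0 then ((-(x ℓ) / p ℓ : ℝ) : WithTop ℝ) else ⊤

theorem coe_le_maxFeasibleStep_iff {x p : ι → ℝ} (hx : 0 ≤ x) {η : ℝ} (hη : 0 ≤ η) :
    (η : WithTop ℝ) ≤ maxFeasibleStep x p ↔ 0 ≤ x + η • p := by
  simp only [maxFeasibleStep, Finset.le_inf_iff, Finset.mem_univ, true_implies, Pi.le_def,
    Pi.zero_apply, Pi.add_apply, Pi.smul_apply, smul_eq_mul]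
  refine forall_congr' fun ℓ => ?_
  split_ifs with hpℓ
  · rw [WithTop.coe_le_coe, le_div_iff_of_neg hpℓ]
    constructor <;> intro h <;> linarith
  · simpa using add_nonneg (hx ℓ) (mul_nonneg hη (not_lt.mp hpℓ))

theorem zero_le_maxFeasibleStep {x : ι → ℝ} (hx : 0 ≤ x) (p : ι → ℝ) :
    (0 : WithTop ℝ) ≤ maxFeasibleStep x p := by
  simpa using (coe_le_maxFeasibleStep_iff (p := p) hx le_rfl).mpr (by simpa using hx)

end

theorem sq_min_sub_le_sq_sub {m s η : ℝ} {τ : WithTop ℝ} (hs : (s : WithTop ℝ) = min ↑m τ)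
    (hη : (η : WithTop ℝ) ≤ τ) : (s - m) ^ 2 ≤ (η - m) ^ 2 := by
  rcases min_choice (m : WithTop ℝ) τ with hmin | hmin
  · rw [hmin, WithTop.coe_inj] at hs
    simp [hs, sq_nonneg]
  · have hsm : s ≤ m := WithTop.coe_le_coe.mp (hs.trans_le (min_le_left _ _))
    have hηs : η ≤ s := WithTop.coe_le_coe.mp (hη.trans_eq (hmin ▸ hs).symm)
    nlinarith

theorem parabola_le_of_eq_min_vertex {a c s η : ℝ} (ha : 0 < a) {τ : WithTop ℝ}
    (hs : (s : WithTop ℝ) = min ↑(-c / a) τ) (hη : (η : WithTop ℝ) ≤ τ) :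
    s * c + s ^ 2 / 2 * a ≤ η * c + η ^ 2 / 2 * a := by
  have hsquare : ∀ t : ℝ, t * c + t ^ 2 / 2 * a = a / 2 * (t - -c / a) ^ 2 - c ^ 2 / (2 * a) := by
    intro t
    field_simp
    ring
  rw [hsquare, hsquare]
  gcongr ?_ - _
  exact mul_le_mul_of_nonneg_left (sq_min_sub_le_sq_sub hs hη) (by positivity)

theorem stmt5_general {n : ℕ} (A : Matrix (Fin n) (Fin n) ℝ) (hA : A.PosDef)
    (b x p : Fin n → ℝ) (hx : 0 ≤ x)
    (hdesc : p ⬝ᵥ (A.mulVec x + b) < 0) (ηstar : ℝ)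
    (hηstar : (ηstar : WithTop ℝ) =
      min ((-(p ⬝ᵥ (A.mulVec x + b)) / (p ⬝ᵥ A.mulVec p) : ℝ) : WithTop ℝ)
        (Finset.univ.inf fun ℓ : Fin n =>
          if p ℓ < 0 then ((-(x ℓ) / p ℓ : ℝ) : WithTop ℝ) else ⊤)) :
    let f : (Fin n → ℝ) → ℝ := fun z => (1/2) * (z ⬝ᵥ A.mulVec z) + b ⬝ᵥ z
    (0 ≤ ηstar ∧ 0 ≤ x + ηstar • p) ∧
      ∀ η : ℝ, 0 ≤ η → 0 ≤ x + η • p → f (x + ηstar • p) ≤ f (x + η • p) := by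
  intro f
  change (ηstar : WithTop ℝ) = min _ (maxFeasibleStep x p) at hηstar
  have hp : p ≠ 0 := by
    rintro rfl
    simp at hdesc
  have hcurv : 0 < p ⬝ᵥ A *ᵥ p := by simpa using hA.dotProduct_mulVec_pos hp
  have hvertex : 0 < -(p ⬝ᵥ (A *ᵥ x + b)) / (p ⬝ᵥ A *ᵥ p) := div_pos (neg_pos.mpr hdesc) hcurv
  have hstar_nonneg : 0 ≤ ηstar := by
    rw [← WithTop.coe_le_coe, hηstar]
    exact le_min (WithTop.coe_le_coe.mpr hvertex.le) (zero_le_maxFeasibleStep hx p)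
  have hstar_le : (ηstar : WithTop ℝ) ≤ maxFeasibleStep x p := hηstar.trans_le (min_le_right _ _)
  have hsymm : A.IsSymm := isHermitian_iff_isSymm.mp hA.isHermitian
  refine ⟨⟨hstar_nonneg, (coe_le_maxFeasibleStep_iff hx hstar_nonneg).mp hstar_le⟩, ?_⟩
  intro η hη hfeas
  change quadObjective A b _ ≤ quadObjective A b _
  rw [quadObjective_add_smul hsymm, quadObjective_add_smul hsymm, add_assoc, add_assoc]
  exact (add_le_add_iff_left _).mpr (parabola_le_of_eq_min_vertex hcurv hηstar
    ((coe_le_maxFeasibleStep_iff hx hη).mpr hfeas))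

/-- with `η' = −pᵀ(Ax+b)/(pᵀAp)` and `η̂_ℓ = −x_ℓ/p_ℓ` when
`p_ℓ < 0` (`+∞` otherwise), the step `η* = min(η', min_ℓ η̂_ℓ)` is a global
minimizer of `η ↦ f(x + ηp)` over `{η ≥ 0 : x + ηp ≥ 0}`. -/
theorem stmt5 {n : ℕ} (A : Matrix (Fin n) (Fin n) ℝ) (hA : A.PosDef)
    (hAsymm : A.IsSymm) (b x p : Fin n → ℝ) (hx : 0 ≤ x)
    (hdesc : p ⬝ᵥ (A.mulVec x + b) < 0) (ηstar : ℝ)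
    (hηstar : (ηstar : WithTop ℝ) =
      min ((-(p ⬝ᵥ (A.mulVec x + b)) / (p ⬝ᵥ A.mulVec p) : ℝ) : WithTop ℝ)
        (Finset.univ.inf fun ℓ : Fin n =>
          if p ℓ < 0 then ((-(x ℓ) / p ℓ : ℝ) : WithTop ℝ) else ⊤)) :
    let f : (Fin n → ℝ) → ℝ := fun z => (1/2) * (z ⬝ᵥ A.mulVec z) + b ⬝ᵥ z
    (0 ≤ ηstar ∧ 0 ≤ x + ηstar • p) ∧
      ∀ η : ℝ, 0 ≤ η → 0 ≤ x + η • p → f (x + ηstar • p) ≤ f (x + η • p) :=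
  stmt5_general A hA b x p hx hdesc ηstar hηstar
end

section
/- Let A be a symmetric positive definite n×n real matrix with smallest eigenvalue λ_min(A). Define the fundamental quantity c(A) = min over z with ‖z‖_∞ = 1 of max over 1 ≤ i ≤ n of z_i (Az)_i. Then λ_min(A)/n ≤ c(A) ≤ λ_min(A). -/
open Matrix
open scoped MatrixOrder

/-!
An eigenvector for `λ_min`, scaled to sup norm one, has `z_i (Az)_i = λ_min z_i² ≤ λ_min` for
every `i`, which gives `c(A) ≤ λ_min`. Conversely, if `‖z‖_∞ = 1` then `zᵀz ≥ 1`, so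
`n · max_i z_i (Az)_i ≥ Σ_i z_i (Az)_i = zᵀAz ≥ λ_min zᵀz ≥ λ_min`.
-/

section

variable {ι : Type*} [Fintype ι]

lemma sq_norm_le_dotProduct_self (z : ι → ℝ) : ‖z‖ ^ 2 ≤ z ⬝ᵥ z := by
  have hsq : ∀ i, z i ^ 2 ≤ z ⬝ᵥ z := fun i => by
    simpa [dotProduct, sq] using
      Finset.single_le_sum (fun j _ => mul_self_nonneg (z j)) (Finset.mem_univ i)
  have hnorm : ‖z‖ ≤ √(z ⬝ᵥ z) :=
    (pi_norm_le_iff_of_nonneg (Real.sqrt_nonneg _)).2 fun i => Real.abs_le_sqrt (hsq i)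
  calc ‖z‖ ^ 2 ≤ √(z ⬝ᵥ z) ^ 2 := by gcongr
    _ = z ⬝ᵥ z := Real.sq_sqrt (Finset.sum_nonneg fun j _ => mul_self_nonneg (z j))

lemma dotProduct_le_card_mul_sup' [Nonempty ι] (x y : ι → ℝ) :
    x ⬝ᵥ y ≤
      Fintype.card ι * Finset.univ.sup' Finset.univ_nonempty (fun i => x i * y i) := by
  simpa [dotProduct] using Finset.sum_le_card_nsmul Finset.univ (fun i => x i * y i) _
    fun i hi => Finset.le_sup' (fun i => x i * y i) hi

lemma sup'_mul_mulVec_le_of_mulVec_eq_smul [Nonempty ι] {A : Matrix ι ι ℝ} {μ : ℝ}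
    {z : ι → ℝ} (hAz : A *ᵥ z = μ • z) (hμ : 0 ≤ μ) (hz : ‖z‖ ≤ 1) :
    Finset.univ.sup' Finset.univ_nonempty (fun i => z i * (A *ᵥ z) i) ≤ μ := by
  refine Finset.sup'_le _ _ fun i _ => ?_
  have hzi : z i ^ 2 ≤ 1 := by
    simpa [sq_abs] using
      pow_le_one₀ (abs_nonneg (z i)) ((norm_le_pi_norm z i).trans hz) (n := 2)
  calc z i * (A *ᵥ z) i = μ * z i ^ 2 := by rw [hAz, Pi.smul_apply, smul_eq_mul]; ring
    _ ≤ μ := mul_le_of_le_one_right hμ hzi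

variable [DecidableEq ι] {A : Matrix ι ι ℝ}

lemma Matrix.IsHermitian.mul_dotProduct_self_le (hA : A.IsHermitian) {r : ℝ}
    (hr : ∀ i, r ≤ hA.eigenvalues i) (x : ι → ℝ) :
    r * (x ⬝ᵥ x) ≤ x ⬝ᵥ (A *ᵥ x) := by
  have hle : algebraMap ℝ _ r ≤ A := by
    refine algebraMap_le_of_le_spectrum ?_ hA.isSelfAdjoint
    rw [hA.spectrum_real_eq_range_eigenvalues]
    rintro _ ⟨i, rfl⟩
    exact hr i
  have := (Matrix.le_iff.mp hle).dotProduct_mulVec_nonneg x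
  simp only [star_trivial, Algebra.algebraMap_eq_smul_one, sub_mulVec, smul_mulVec, one_mulVec,
    dotProduct_sub, dotProduct_smul, smul_eq_mul] at this
  linarith

lemma Matrix.IsHermitian.div_card_le_sup'_mul_mulVec [Nonempty ι] (hA : A.IsHermitian)
    {r : ℝ} (hr₀ : 0 ≤ r) (hr : ∀ i, r ≤ hA.eigenvalues i) {z : ι → ℝ}
    (hz : ‖z‖ = 1) :
    r / Fintype.card ι ≤
      Finset.univ.sup' Finset.univ_nonempty (fun i => z i * (A *ᵥ z) i) := by
  have hzz : 1 ≤ z ⬝ᵥ z := by simpa [hz] using sq_norm_le_dotProduct_self z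
  rw [div_le_iff₀' (by exact_mod_cast Fintype.card_pos)]
  calc r ≤ r * (z ⬝ᵥ z) := le_mul_of_one_le_right hr₀ hzz
    _ ≤ z ⬝ᵥ (A *ᵥ z) := hA.mul_dotProduct_self_le hr z
    _ ≤ _ := dotProduct_le_card_mul_sup' z (A *ᵥ z)

lemma Matrix.IsHermitian.exists_norm_eq_one_mulVec_eq_smul (hA : A.IsHermitian) (i : ι) :
    ∃ z : ι → ℝ, ‖z‖ = 1 ∧ A *ᵥ z = hA.eigenvalues i • z := by
  set v := (hA.eigenvectorBasis i).ofLp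
  have hv : v ≠ 0 := fun h =>
    hA.eigenvectorBasis.orthonormal.ne_zero i (by ext j; exact congrFun h j)
  refine ⟨‖v‖⁻¹ • v, ?_, ?_⟩
  · rw [norm_smul, norm_inv, norm_norm, inv_mul_cancel₀ (norm_ne_zero_iff.mpr hv)]
  · rw [mulVec_smul, hA.mulVec_eigenvectorBasis i, smul_comm]

end

theorem stmt7_general {n : ℕ} (A : Matrix (Fin (n+1)) (Fin (n+1)) ℝ) (hA : A.PosDef) :
    let lamMin : ℝ := ⨅ i, hA.1.eigenvalues i
    let c : ℝ := sInf {t : ℝ | ∃ z : Fin (n+1) → ℝ, ‖z‖ = 1 ∧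
      t = Finset.univ.sup' Finset.univ_nonempty (fun i => z i * A.mulVec z i)}
    lamMin / (n+1) ≤ c ∧ c ≤ lamMin := by
  intro lamMin c
  obtain ⟨i₀, hi₀⟩ := exists_eq_ciInf_of_finite (f := hA.1.eigenvalues)
  have hlam : ∀ i, lamMin ≤ hA.1.eigenvalues i := ciInf_le (Finite.bddBelow_range _)
  have hpos : 0 < lamMin := (hA.eigenvalues_pos i₀).trans_eq hi₀
  have hlower : ∀ t ∈ {t : ℝ | ∃ z : Fin (n+1) → ℝ, ‖z‖ = 1 ∧
      t = Finset.univ.sup' Finset.univ_nonempty (fun i => z i * A.mulVec z i)},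
      lamMin / (n+1) ≤ t := by
    rintro _ ⟨z, hz, rfl⟩
    simpa using hA.1.div_card_le_sup'_mul_mulVec hpos.le hlam hz
  obtain ⟨z, hz, hAz⟩ := hA.1.exists_norm_eq_one_mulVec_eq_smul i₀
  rw [hi₀] at hAz
  exact ⟨le_csInf ⟨_, z, hz, rfl⟩ hlower,
    (csInf_le ⟨_, hlower⟩ ⟨z, hz, rfl⟩).trans
      (sup'_mul_mulVec_le_of_mulVec_eq_smul hAz hpos.le hz.le)⟩

/-- for `A` symmetric positive definite, the fundamental
quantity `c(A) = min_{‖z‖_∞ = 1} max_i z_i (Az)_i` satisfies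
`λ_min(A)/n ≤ c(A) ≤ λ_min(A)`.  (The norm on `Fin (n+1) → ℝ` is the sup
norm, and the dimension is `n+1 ≥ 1`.) -/
theorem stmt7 {n : ℕ} (A : Matrix (Fin (n+1)) (Fin (n+1)) ℝ) (hA : A.PosDef)
    (hAsymm : A.IsSymm) :
    let lamMin : ℝ := ⨅ i, hA.1.eigenvalues i
    let c : ℝ := sInf {t : ℝ | ∃ z : Fin (n+1) → ℝ, ‖z‖ = 1 ∧
      t = Finset.univ.sup' Finset.univ_nonempty (fun i => z i * A.mulVec z i)}
    lamMin / (n+1) ≤ c ∧ c ≤ lamMin :=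
  stmt7_general A hA
end

section
/- Let h and g be proper convex lower semicontinuous functions on ℝⁿ with 0 in the relative interior of dom g − dom h. Then inf_x h(x) + g(x) = −min_w h*(−w) + g*(w), where h* and g* denote the Fenchel–Legendre conjugates; moreover if x* and w* are solutions of the primal and dual problems respectively, then x* ∈ ∂h*(−w*) and w* ∈ ∂g(x*). -/
open Matrix Pointwise

/-- Fenchel–Legendre conjugate of an extended-real-valued function on `ℝⁿ`. -/
noncomputable def fenchelConj {n : ℕ} (f : (Fin n → ℝ) → EReal) (w : Fin n → ℝ) : EReal :=
  ⨆ x : Fin n → ℝ, ((w ⬝ᵥ x : ℝ) : EReal) - f x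

/-- `f` is proper: nowhere `−∞` and not identically `+∞`. -/
def ProperFn {n : ℕ} (f : (Fin n → ℝ) → EReal) : Prop :=
  (∀ x, f x ≠ ⊥) ∧ ∃ x, f x ≠ ⊤

/-- Convexity for extended-real-valued functions. -/
def ConvexFn {n : ℕ} (f : (Fin n → ℝ) → EReal) : Prop :=
  ∀ x y : Fin n → ℝ, ∀ a b : ℝ, 0 ≤ a → 0 ≤ b → a + b = 1 →
    f (a • x + b • y) ≤ (a : EReal) * f x + (b : EReal) * f y

/-- Effective domain. -/
def domFn {n : ℕ} (f : (Fin n → ℝ) → EReal) : Set (Fin n → ℝ) := {x | f x ≠ ⊤}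

/-- Convex subdifferential of an extended-real-valued function. -/
def subdiffFn {n : ℕ} (f : (Fin n → ℝ) → EReal) (x : Fin n → ℝ) : Set (Fin n → ℝ) :=
  {w | ∀ y, f x + ((w ⬝ᵥ (y - x) : ℝ) : EReal) ≤ f y}

/-!
Perturb the primal problem: `v u = ⨅ x, h x + g (x + u)` is convex in `u`, with effective domain
`dom g - dom h`, so `0` lies in the relative interior of `dom v`. There a convex function that is
not `⊥` has a subgradient `w`, and unfolding `v 0 + w ⬝ᵥ (y - x) ≤ h x + g y` gives
`h* (-w) + g* w ≤ -v 0`. With weak duality, `w` solves the dual problem and there is no gap.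
For solutions `x*`, `w*`, the Fenchel–Young inequalities for `h` at `(x*, -w*)` and for `g` at
`(x*, w*)` add up to an equality, so both are equalities, which is the claimed subdifferential
relation.
-/

theorem EReal.coe_eq_and_coe_eq_of_add_eq {A B : EReal} {c d : ℝ} (hA : (c : EReal) ≤ A)
    (hB : (d : EReal) ≤ B) (h : (c : EReal) + d = A + B) : (c : EReal) = A ∧ (d : EReal) = B := by
  have hAb : A ≠ ⊥ := ne_bot_of_le_ne_bot (EReal.coe_ne_bot c) hA
  have hBb : B ≠ ⊥ := ne_bot_of_le_ne_bot (EReal.coe_ne_bot d) hB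
  have hAB : A + B ≠ ⊤ := h ▸ EReal.add_ne_top (EReal.coe_ne_top c) (EReal.coe_ne_top d)
  obtain ⟨hAt, hBt⟩ := (EReal.add_ne_top_iff_ne_top₂ hAb hBb).1 hAB
  lift A to ℝ using ⟨hAt, hAb⟩
  lift B to ℝ using ⟨hBt, hBb⟩
  norm_cast at hA hB h ⊢
  constructor <;> linarith

section Subgradient

variable {E : Type*} [NormedAddCommGroup E] [NormedSpace ℝ E]

theorem ConvexOn.exists_subgradient_of_mem_interior [FiniteDimensional ℝ E] {s : Set E}
    {φ : E → ℝ} (hφ : ConvexOn ℝ s φ) {x₀ : E} (hx₀ : x₀ ∈ interior s) :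
    ∃ ℓ : E →L[ℝ] ℝ, ∀ x ∈ s, φ x₀ + ℓ (x - x₀) ≤ φ x := by
  -- separate `(x₀, φ x₀)` from the open strict epigraph of `φ` over `interior s`
  set U : Set (E × ℝ) := {p | p.1 ∈ interior s ∧ φ p.1 < p.2}
  have hUconv : Convex ℝ U := (hφ.subset interior_subset hφ.1.interior).convex_strict_epigraph
  have hUopen : IsOpen U := by
    have hcont : ContinuousOn (fun p : E × ℝ => p.2 - φ p.1) (interior s ×ˢ Set.univ) :=
      continuousOn_snd.sub (hφ.continuousOn_interior.comp continuousOn_fst fun p hp => hp.1)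
    convert hcont.isOpen_inter_preimage (isOpen_interior.prod isOpen_univ)
      (isOpen_Ioi (a := 0)) using 1
    ext p
    simp [U, sub_pos]
  obtain ⟨f, hf⟩ := geometric_hahn_banach_open_point hUconv hUopen
    (fun h => lt_irrefl _ h.2 : (x₀, φ x₀) ∉ U)
  set c := f (0, 1)
  have hf_apply : ∀ p t, f (p, t) = f (p, 0) + t * c := fun p t => by
    rw [← smul_eq_mul, ← map_smul, ← map_add]
    simp
  have hc : c < 0 := by
    have := hf (x₀, φ x₀ + 1) ⟨hx₀, lt_add_one _⟩
    rw [hf_apply, hf_apply x₀ (φ x₀)] at this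
    linarith
  set ℓ : E →L[ℝ] ℝ := (-c)⁻¹ • f.comp (ContinuousLinearMap.inl ℝ E ℝ)
  have hℓ : ∀ p, ℓ (p - x₀) * (-c) = f (p, 0) - f (x₀, 0) := fun p => by
    simp only [ℓ, _root_.smul_apply, ContinuousLinearMap.comp_apply, ContinuousLinearMap.inl_apply,
      smul_eq_mul]
    rw [← map_sub, Prod.mk_sub_mk, sub_zero]
    field_simp [hc.ne]
  have hint : ∀ p ∈ interior s, φ x₀ + ℓ (p - x₀) ≤ φ p := by
    intro p hp
    refine le_of_forall_gt fun t ht => ?_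
    have hlt := hf (p, t) ⟨hp, ht⟩
    rw [hf_apply, hf_apply x₀] at hlt
    nlinarith [hℓ p]
  refine ⟨ℓ, fun p hp => ?_⟩
  have hm := hint _ (hφ.1.combo_interior_self_mem_interior hx₀ hp (by norm_num : (0 : ℝ) < 1 / 2)
    (by norm_num : (0 : ℝ) ≤ 1 / 2) (by norm_num))
  have hconv := hφ.2 (interior_subset hx₀) hp (by norm_num : (0 : ℝ) ≤ 1 / 2)
    (by norm_num : (0 : ℝ) ≤ 1 / 2) (by norm_num)
  rw [show (1 / 2 : ℝ) • x₀ + (1 / 2 : ℝ) • p - x₀ = (1 / 2 : ℝ) • (p - x₀) by module,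
    map_smul, smul_eq_mul] at hm
  simp only [smul_eq_mul] at hconv
  linarith

end Subgradient

section IntrinsicInterior

open Filter Topology

variable {E : Type*} [NormedAddCommGroup E] [NormedSpace ℝ E] {s : Set E}

theorem zero_mem_interior_preimage_span (h0 : (0 : E) ∈ intrinsicInterior ℝ s) :
    (0 : Submodule.span ℝ s) ∈ interior ((↑) ⁻¹' s : Set (Submodule.span ℝ s)) := by
  have hspan : (affineSpan ℝ s : Set E) = Submodule.span ℝ s := by
    rw [← affineSpan_insert_zero, Set.insert_eq_of_mem (intrinsicInterior_subset h0)]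
  obtain ⟨z, hz, hz0⟩ := h0
  let j : Submodule.span ℝ s → affineSpan ℝ s := fun y => ⟨y, by
    rw [← SetLike.mem_coe, hspan]; exact y.2⟩
  have hj0 : j 0 = z := Subtype.ext hz0.symm
  exact preimage_interior_subset_interior_preimage (f := j) (continuous_subtype_val.subtype_mk _)
    (show j 0 ∈ interior _ from hj0 ▸ hz)

theorem exists_neg_smul_mem_of_zero_mem_intrinsicInterior (h0 : (0 : E) ∈ intrinsicInterior ℝ s)
    {u : E} (hu : u ∈ s) : ∃ δ : ℝ, 0 < δ ∧ (-δ) • u ∈ s := by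
  let u' : Submodule.span ℝ s := ⟨u, Submodule.subset_span hu⟩
  have hlim : Tendsto (fun δ : ℝ => (-δ) • u') (𝓝[>] 0) (𝓝 0) := by
    have hcont : Continuous fun δ : ℝ => (-δ) • u' := by fun_prop
    simpa using (hcont.tendsto 0).mono_left nhdsWithin_le_nhds
  obtain ⟨δ, hδ, hδ0⟩ := ((hlim.eventually (mem_interior_iff_mem_nhds.1
    (zero_mem_interior_preimage_span h0))).and self_mem_nhdsWithin).exists
  exact ⟨δ, hδ0, hδ⟩

theorem ConvexOn.exists_subgradient_of_zero_mem_intrinsicInterior [FiniteDimensional ℝ E]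
    {φ : E → ℝ} (hφ : ConvexOn ℝ s φ) (h0 : (0 : E) ∈ intrinsicInterior ℝ s) :
    ∃ ℓ : E →ₗ[ℝ] ℝ, ∀ x ∈ s, φ 0 + ℓ x ≤ φ x := by
  obtain ⟨ℓ, hℓ⟩ := (hφ.comp_linearMap (Submodule.span ℝ s).subtype
    ).exists_subgradient_of_mem_interior (zero_mem_interior_preimage_span h0)
  obtain ⟨L, hL⟩ := LinearMap.exists_extend (ℓ : Submodule.span ℝ s →ₗ[ℝ] ℝ)
  refine ⟨L, fun x hx => ?_⟩
  have hLx : L x = ℓ ⟨x, Submodule.subset_span hx⟩ := LinearMap.congr_fun hL ⟨x, _⟩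
  simpa [hLx] using hℓ ⟨x, Submodule.subset_span hx⟩ hx

end IntrinsicInterior

section Conjugate

variable {n : ℕ}

theorem coe_dotProduct_sub_le_fenchelConj (f : (Fin n → ℝ) → EReal) (w x : Fin n → ℝ) :
    ((w ⬝ᵥ x : ℝ) : EReal) - f x ≤ fenchelConj f w :=
  le_iSup (fun x => ((w ⬝ᵥ x : ℝ) : EReal) - f x) x

theorem mem_subdiffFn_of_fenchelConj_le {f : (Fin n → ℝ) → EReal} {x w : Fin n → ℝ} {r : ℝ}
    (hx : f x = r) (hw : fenchelConj f w ≤ ((w ⬝ᵥ x - r : ℝ) : EReal)) : w ∈ subdiffFn f x := by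
  intro y
  have hy := (coe_dotProduct_sub_le_fenchelConj f w y).trans hw
  rw [hx]
  generalize f y = t at hy ⊢
  induction t using EReal.rec with
  | bot =>
    rw [EReal.coe_sub_bot, top_le_iff] at hy
    exact absurd hy (EReal.coe_ne_top _)
  | top => exact le_top
  | coe t =>
    rw [← EReal.coe_sub, EReal.coe_le_coe_iff] at hy
    rw [← EReal.coe_add, EReal.coe_le_coe_iff, dotProduct_sub]
    linarith

theorem mem_subdiffFn_fenchelConj_of_fenchelConj_le {f : (Fin n → ℝ) → EReal}
    {x w : Fin n → ℝ} {r : ℝ} (hx : f x = r) (hw : fenchelConj f w ≤ ((w ⬝ᵥ x - r : ℝ) : EReal)) :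
    x ∈ subdiffFn (fenchelConj f) w := by
  intro y
  calc fenchelConj f w + ((x ⬝ᵥ (y - w) : ℝ) : EReal)
      ≤ ((w ⬝ᵥ x - r : ℝ) : EReal) + ((x ⬝ᵥ (y - w) : ℝ) : EReal) := add_le_add_left hw _
    _ = ((y ⬝ᵥ x : ℝ) : EReal) - f x := by
      rw [hx, ← EReal.coe_add, ← EReal.coe_sub, dotProduct_sub, dotProduct_comm x y,
        dotProduct_comm x w]
      congr 1; ring
    _ ≤ fenchelConj f y := coe_dotProduct_sub_le_fenchelConj f y x

variable {h g : (Fin n → ℝ) → EReal}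

theorem neg_iInf_add_le_fenchelConj_add (hh : ∀ x, h x ≠ ⊥) (hg : ∀ x, g x ≠ ⊥)
    (w : Fin n → ℝ) : -(⨅ x, h x + g x) ≤ fenchelConj h (-w) + fenchelConj g w := by
  rw [EReal.neg_le]
  refine le_iInf fun x => ?_
  rw [EReal.neg_le]
  by_cases hx : h x + g x = ⊤
  · simp [hx]
  obtain ⟨hhx, hgx⟩ := (EReal.add_ne_top_iff_ne_top₂ (hh x) (hg x)).1 hx
  lift h x to ℝ using ⟨hhx, hh x⟩ with a ha
  lift g x to ℝ using ⟨hgx, hg x⟩ with b hb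
  calc -((a : EReal) + b) = (((-w) ⬝ᵥ x - a : ℝ) : EReal) + ((w ⬝ᵥ x - b : ℝ) : EReal) := by
        rw [neg_dotProduct, ← EReal.coe_add, ← EReal.coe_neg, ← EReal.coe_add]; congr 1; ring
    _ ≤ fenchelConj h (-w) + fenchelConj g w := by
      rw [EReal.coe_sub, EReal.coe_sub, ha, hb]
      exact add_le_add (coe_dotProduct_sub_le_fenchelConj h (-w) x)
        (coe_dotProduct_sub_le_fenchelConj g w x)

theorem mem_subdiffFn_of_fenchelConj_add_eq (hh : ∀ x, h x ≠ ⊥) (hg : ∀ x, g x ≠ ⊥)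
    {x w : Fin n → ℝ} (hx : h x + g x ≠ ⊤)
    (hw : fenchelConj h (-w) + fenchelConj g w = -(h x + g x)) :
    x ∈ subdiffFn (fenchelConj h) (-w) ∧ w ∈ subdiffFn g x := by
  obtain ⟨hhx, hgx⟩ := (EReal.add_ne_top_iff_ne_top₂ (hh x) (hg x)).1 hx
  lift h x to ℝ using ⟨hhx, hh x⟩ with a ha
  lift g x to ℝ using ⟨hgx, hg x⟩ with b hb
  have hA := coe_dotProduct_sub_le_fenchelConj h (-w) x
  have hB := coe_dotProduct_sub_le_fenchelConj g w x
  rw [← ha, ← EReal.coe_sub] at hA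
  rw [← hb, ← EReal.coe_sub] at hB
  have hsum : (((-w) ⬝ᵥ x - a : ℝ) : EReal) + ((w ⬝ᵥ x - b : ℝ) : EReal)
      = fenchelConj h (-w) + fenchelConj g w := by
    rw [hw, neg_dotProduct, ← EReal.coe_add, ← EReal.coe_add, ← EReal.coe_neg]
    congr 1; ring
  obtain ⟨hA', hB'⟩ := EReal.coe_eq_and_coe_eq_of_add_eq hA hB hsum
  exact ⟨mem_subdiffFn_fenchelConj_of_fenchelConj_le ha.symm hA'.ge,
    mem_subdiffFn_of_fenchelConj_le hb.symm hB'.ge⟩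

end Conjugate

noncomputable def perturbValue {n : ℕ} (h g : (Fin n → ℝ) → EReal) (u : Fin n → ℝ) : EReal :=
  ⨅ x, h x + g (x + u)

section PerturbValue

variable {n : ℕ} {h g : (Fin n → ℝ) → EReal}

theorem perturbValue_zero (h g : (Fin n → ℝ) → EReal) : perturbValue h g 0 = ⨅ x, h x + g x := by
  simp only [perturbValue, add_zero]

theorem perturbValue_ne_top_iff (hh : ∀ x, h x ≠ ⊥) (hg : ∀ x, g x ≠ ⊥) {u : Fin n → ℝ} :
    perturbValue h g u ≠ ⊤ ↔ u ∈ domFn g - domFn h := by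
  rw [perturbValue, Ne, iInf_eq_top, not_forall, Set.mem_sub]
  simp_rw [← ne_eq, EReal.add_ne_top_iff_ne_top₂ (hh _) (hg _)]
  constructor
  · rintro ⟨x, hx, hxu⟩
    exact ⟨x + u, hxu, x, hx, add_sub_cancel_left x u⟩
  · rintro ⟨y, hy, x, hx, rfl⟩
    exact ⟨x, hx, by rwa [add_sub_cancel]⟩

theorem perturbValue_combo_le (hconv : ConvexFn h) (gconv : ConvexFn g) {a b : ℝ} (ha : 0 ≤ a)
    (hb : 0 ≤ b) (hab : a + b = 1) {u₁ u₂ : Fin n → ℝ} {t₁ t₂ : ℝ} (h₁ : perturbValue h g u₁ < t₁)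
    (h₂ : perturbValue h g u₂ < t₂) :
    perturbValue h g (a • u₁ + b • u₂) ≤ ((a * t₁ + b * t₂ : ℝ) : EReal) := by
  obtain ⟨x₁, hx₁⟩ := iInf_lt_iff.1 h₁
  obtain ⟨x₂, hx₂⟩ := iInf_lt_iff.1 h₂
  have ha' : (0 : EReal) ≤ a := by exact_mod_cast ha
  have hb' : (0 : EReal) ≤ b := by exact_mod_cast hb
  calc perturbValue h g (a • u₁ + b • u₂)
      ≤ h (a • x₁ + b • x₂) + g (a • (x₁ + u₁) + b • (x₂ + u₂)) := by
        rw [show a • (x₁ + u₁) + b • (x₂ + u₂) = a • x₁ + b • x₂ + (a • u₁ + b • u₂) by module]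
        exact iInf_le _ _
    _ ≤ (a * h x₁ + b * h x₂) + (a * g (x₁ + u₁) + b * g (x₂ + u₂)) :=
        add_le_add (hconv _ _ _ _ ha hb hab) (gconv _ _ _ _ ha hb hab)
    _ = a * (h x₁ + g (x₁ + u₁)) + b * (h x₂ + g (x₂ + u₂)) := by
        rw [EReal.left_distrib_of_nonneg_of_ne_top ha' (EReal.coe_ne_top a),
          EReal.left_distrib_of_nonneg_of_ne_top hb' (EReal.coe_ne_top b), add_add_add_comm]
    _ ≤ a * t₁ + b * t₂ :=
        add_le_add (mul_le_mul_of_nonneg_left hx₁.le ha') (mul_le_mul_of_nonneg_left hx₂.le hb')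
    _ = ((a * t₁ + b * t₂ : ℝ) : EReal) := by norm_cast

theorem convex_setOf_perturbValue_ne_top (hconv : ConvexFn h) (gconv : ConvexFn g) :
    Convex ℝ {u | perturbValue h g u ≠ ⊤} := by
  intro u₁ hu₁ u₂ hu₂ a b ha hb hab
  obtain ⟨t₁, ht₁, -⟩ := EReal.exists_between_coe_real (lt_top_iff_ne_top.2 hu₁)
  obtain ⟨t₂, ht₂, -⟩ := EReal.exists_between_coe_real (lt_top_iff_ne_top.2 hu₂)
  exact ne_top_of_le_ne_top (EReal.coe_ne_top _)
    (perturbValue_combo_le hconv gconv ha hb hab ht₁ ht₂)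

theorem perturbValue_combo_eq_bot (hconv : ConvexFn h) (gconv : ConvexFn g) {a b : ℝ}
    (ha : 0 < a) (hb : 0 ≤ b) (hab : a + b = 1) {u₁ u₂ : Fin n → ℝ} (h₁ : perturbValue h g u₁ = ⊥)
    (h₂ : perturbValue h g u₂ ≠ ⊤) : perturbValue h g (a • u₁ + b • u₂) = ⊥ := by
  obtain ⟨t₂, ht₂, -⟩ := EReal.exists_between_coe_real (lt_top_iff_ne_top.2 h₂)
  refine (EReal.eq_bot_iff_forall_lt _).2 fun r => ?_
  have ht₁ : perturbValue h g u₁ < (((r - 1 - b * t₂) / a : ℝ) : EReal) :=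
    h₁ ▸ EReal.bot_lt_coe _
  refine (perturbValue_combo_le hconv gconv ha.le hb hab ht₁ ht₂).trans_lt ?_
  rw [EReal.coe_lt_coe_iff, mul_div_cancel₀ _ ha.ne']
  linarith

theorem convexOn_toReal_perturbValue (hconv : ConvexFn h) (gconv : ConvexFn g)
    (hbot : ∀ u, perturbValue h g u ≠ ⊤ → perturbValue h g u ≠ ⊥) :
    ConvexOn ℝ {u | perturbValue h g u ≠ ⊤} fun u => (perturbValue h g u).toReal := by
  refine ⟨convex_setOf_perturbValue_ne_top hconv gconv, fun u₁ hu₁ u₂ hu₂ a b ha hb hab => ?_⟩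
  set c := a * (perturbValue h g u₁).toReal + b * (perturbValue h g u₂).toReal
  suffices hc : perturbValue h g (a • u₁ + b • u₂) ≤ c by
    simpa using EReal.toReal_le_toReal hc (hbot _ (ne_top_of_le_ne_top (EReal.coe_ne_top c) hc))
      (EReal.coe_ne_top c)
  refine EReal.le_of_forall_lt_iff_le.1 fun z hz => ?_
  have hδ : 0 < z - c := sub_pos.2 (EReal.coe_lt_coe_iff.1 hz)
  have hlt : ∀ u, perturbValue h g u ≠ ⊤ →
      perturbValue h g u < (((perturbValue h g u).toReal + (z - c) : ℝ) : EReal) := fun u hu => by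
    conv_lhs => rw [← EReal.coe_toReal hu (hbot u hu)]
    exact EReal.coe_lt_coe_iff.2 (lt_add_of_pos_right _ hδ)
  calc perturbValue h g (a • u₁ + b • u₂)
      ≤ ((a * ((perturbValue h g u₁).toReal + (z - c))
          + b * ((perturbValue h g u₂).toReal + (z - c)) : ℝ) : EReal) :=
        perturbValue_combo_le hconv gconv ha hb hab (hlt u₁ hu₁) (hlt u₂ hu₂)
    _ = z := by congr 1; linear_combination (z - c) * hab

theorem exists_mem_subdiffFn_perturbValue_zero (hh : ∀ x, h x ≠ ⊥) (hg : ∀ x, g x ≠ ⊥)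
    (hconv : ConvexFn h) (gconv : ConvexFn g)
    (hri : (0 : Fin n → ℝ) ∈ intrinsicInterior ℝ (domFn g - domFn h)) :
    ∃ w, w ∈ subdiffFn (perturbValue h g) 0 := by
  by_cases hbot : perturbValue h g 0 = ⊥
  · exact ⟨0, fun u => by rw [hbot, EReal.bot_add]; exact bot_le⟩
  have hdom : domFn g - domFn h = {u | perturbValue h g u ≠ ⊤} :=
    (Set.ext fun u => perturbValue_ne_top_iff hh hg).symm
  rw [hdom] at hri
  -- `0` lies strictly between `u` and `-δ • u`, so a value `⊥` at `u` would propagate to `0`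
  have hne_bot : ∀ u, perturbValue h g u ≠ ⊤ → perturbValue h g u ≠ ⊥ := by
    intro u hu hu_bot
    obtain ⟨δ, hδ, hδu⟩ := exists_neg_smul_mem_of_zero_mem_intrinsicInterior hri hu
    have hcombo : (δ / (1 + δ)) • u + (1 / (1 + δ)) • (-δ) • u = 0 := by
      rw [smul_smul, ← add_smul]
      field_simp
      simp
    apply hbot
    rw [← hcombo]
    exact perturbValue_combo_eq_bot hconv gconv (by positivity) (by positivity)
      (by field_simp; ring) hu_bot hδu
  obtain ⟨ℓ, hℓ⟩ := (convexOn_toReal_perturbValue hconv gconv hne_bot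
    ).exists_subgradient_of_zero_mem_intrinsicInterior hri
  refine ⟨(dotProductEquiv ℝ (Fin n)).symm ℓ, fun u => ?_⟩
  have hℓu : (dotProductEquiv ℝ (Fin n)).symm ℓ ⬝ᵥ (u - 0) = ℓ u := by
    rw [sub_zero]
    exact LinearMap.congr_fun ((dotProductEquiv ℝ (Fin n)).apply_symm_apply ℓ) u
  by_cases hu : perturbValue h g u = ⊤
  · rw [hu]; exact le_top
  have h0 := intrinsicInterior_subset hri
  rw [hℓu, ← EReal.coe_toReal hu (hne_bot u hu), ← EReal.coe_toReal h0 hbot, ← EReal.coe_add]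
  exact EReal.coe_le_coe_iff.2 (hℓ u hu)

theorem fenchelConj_add_le_of_mem_subdiffFn_perturbValue (hh : ∀ x, h x ≠ ⊥)
    (hg : ∀ x, g x ≠ ⊥) {w : Fin n → ℝ} (hw : w ∈ subdiffFn (perturbValue h g) 0) :
    fenchelConj h (-w) + fenchelConj g w ≤ -perturbValue h g 0 := by
  refine EReal.add_le_of_forall_lt fun a ha b hb => ?_
  obtain ⟨x, hx⟩ := lt_iSup_iff.1 ha
  obtain ⟨y, hy⟩ := lt_iSup_iff.1 hb
  refine (add_le_add hx.le hy.le).trans ?_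
  by_cases hhx : h x = ⊤
  · simp [hhx]
  by_cases hgy : g y = ⊤
  · simp [hgy]
  have hv : perturbValue h g 0 + ((w ⬝ᵥ (y - x) : ℝ) : EReal) ≤ h x + g y := by
    refine (sub_zero (y - x) ▸ hw (y - x)).trans ?_
    simpa [perturbValue] using iInf_le (fun z => h z + g (z + (y - x))) x
  lift h x to ℝ using ⟨hhx, hh x⟩ with r
  lift g y to ℝ using ⟨hgy, hg y⟩ with t
  generalize perturbValue h g 0 = p at hv ⊢
  induction p using EReal.rec with
  | bot => simp
  | top =>
    rw [EReal.top_add_of_ne_bot (EReal.coe_ne_bot _), top_le_iff] at hv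
    exact absurd hv (EReal.add_ne_top (EReal.coe_ne_top r) (EReal.coe_ne_top t))
  | coe p =>
    norm_cast at hv ⊢
    rw [dotProduct_sub] at hv
    rw [neg_dotProduct]
    linarith

end PerturbValue

theorem stmt10_general {n : ℕ} (h g : (Fin n → ℝ) → EReal)
    (hproper : ProperFn h) (gproper : ProperFn g)
    (hconv : ConvexFn h) (gconv : ConvexFn g)
    (hri : (0 : Fin n → ℝ) ∈ intrinsicInterior ℝ (domFn g - domFn h)) :
    (⨅ x : Fin n → ℝ, h x + g x)
        = - (⨅ w : Fin n → ℝ, fenchelConj h (-w) + fenchelConj g w) ∧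
    (∃ wstar : Fin n → ℝ, fenchelConj h (-wstar) + fenchelConj g wstar
        = ⨅ w : Fin n → ℝ, fenchelConj h (-w) + fenchelConj g w) ∧
    ∀ xstar wstar : Fin n → ℝ,
      (h xstar + g xstar = ⨅ x : Fin n → ℝ, h x + g x) →
      (fenchelConj h (-wstar) + fenchelConj g wstar
        = ⨅ w : Fin n → ℝ, fenchelConj h (-w) + fenchelConj g w) →
      xstar ∈ subdiffFn (fenchelConj h) (-wstar) ∧ wstar ∈ subdiffFn g xstar := by
  have weak := neg_iInf_add_le_fenchelConj_add hproper.1 gproper.1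
  obtain ⟨w, hw⟩ := exists_mem_subdiffFn_perturbValue_zero hproper.1 gproper.1 hconv gconv hri
  have hw_eq : fenchelConj h (-w) + fenchelConj g w = -(⨅ x, h x + g x) := by
    refine le_antisymm ?_ (weak w)
    simpa only [perturbValue_zero] using
      fenchelConj_add_le_of_mem_subdiffFn_perturbValue hproper.1 gproper.1 hw
  have hdual : (⨅ w, fenchelConj h (-w) + fenchelConj g w) = -(⨅ x, h x + g x) :=
    le_antisymm ((iInf_le _ w).trans hw_eq.le) (le_iInf weak)
  have hprimal : (⨅ x, h x + g x) ≠ ⊤ := by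
    rw [← perturbValue_zero, perturbValue_ne_top_iff hproper.1 gproper.1]
    exact intrinsicInterior_subset hri
  refine ⟨by rw [hdual, neg_neg], ⟨w, hw_eq.trans hdual.symm⟩, fun xstar wstar hx hw => ?_⟩
  exact mem_subdiffFn_of_fenchelConj_add_eq hproper.1 gproper.1 (hx ▸ hprimal)
    (by rw [hw, hdual, hx])

/-- Fenchel duality: if `h, g` are proper convex lsc with
`0 ∈ ri(dom g − dom h)`, then `inf_x h(x) + g(x) = −min_w h*(−w) + g*(w)`
(the dual minimum being attained), and if `x*`, `w*` solve the primal and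
dual problems then `x* ∈ ∂h*(−w*)` and `w* ∈ ∂g(x*)`. -/
theorem stmt10 {n : ℕ} (h g : (Fin n → ℝ) → EReal)
    (hproper : ProperFn h) (gproper : ProperFn g)
    (hconv : ConvexFn h) (gconv : ConvexFn g)
    (hlsc : LowerSemicontinuous h) (glsc : LowerSemicontinuous g)
    (hri : (0 : Fin n → ℝ) ∈ intrinsicInterior ℝ (domFn g - domFn h)) :
    (⨅ x : Fin n → ℝ, h x + g x)
        = - (⨅ w : Fin n → ℝ, fenchelConj h (-w) + fenchelConj g w) ∧
    (∃ wstar : Fin n → ℝ, fenchelConj h (-wstar) + fenchelConj g wstar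
        = ⨅ w : Fin n → ℝ, fenchelConj h (-w) + fenchelConj g w) ∧
    ∀ xstar wstar : Fin n → ℝ,
      (h xstar + g xstar = ⨅ x : Fin n → ℝ, h x + g x) →
      (fenchelConj h (-wstar) + fenchelConj g wstar
        = ⨅ w : Fin n → ℝ, fenchelConj h (-w) + fenchelConj g w) →
      xstar ∈ subdiffFn (fenchelConj h) (-wstar) ∧ wstar ∈ subdiffFn g xstar :=
  stmt10_general h g hproper gproper hconv gconv hri
end

section
/- Let h̃ and g̃ be proper convex lower semicontinuous functions on ℝⁿ. Then inf_{z ∈ dom h̃} h̃(z) − g̃(z) = inf_{w ∈ dom g̃*} g̃*(w) − h̃*(w), where * denotes the Fenchel–Legendre conjugate (Toland duality for differences of convex functions). -/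
open Matrix

lemma toland_fin (a : EReal) (h1 : a ≠ ⊥) (h2 : a ≠ ⊤) : ∃ v : ℝ, a = (v : EReal) := by
  lift a to ℝ using ⟨h2, h1⟩; exact ⟨a, rfl⟩

lemma toland_le_of_eps (a : EReal) (C : ℝ)
    (h : ∀ ε : ℝ, 0 < ε → a ≤ ((C + ε : ℝ) : EReal)) : a ≤ (C : EReal) := by
  by_contra hc
  push_neg at hc
  rcases EReal.lt_iff_exists_real_btwn.1 hc with ⟨q, hq1, hq2⟩
  have hCq : C < q := EReal.coe_lt_coe_iff.1 hq1
  have := h (q - C) (by linarith)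
  rw [show C + (q - C) = q by ring] at this
  exact absurd (lt_of_lt_of_le hq2 this) (lt_irrefl _)

lemma toland_eq_bot (a : EReal) (h : ∀ M : ℝ, a ≤ (M : EReal)) : a = ⊥ := by
  by_contra hc
  rcases EReal.lt_iff_exists_real_btwn.1 (Ne.bot_lt hc) with ⟨q, _, hq2⟩
  exact absurd (lt_of_lt_of_le hq2 (h q)) (lt_irrefl _)

lemma toland_conj_ne_bot {n : ℕ} (g : (Fin n → ℝ) → EReal) (gprop : ProperFn g)
    (w : Fin n → ℝ) : fenchelConj g w ≠ ⊥ := by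
  obtain ⟨hnb, x0, hx0⟩ := gprop
  obtain ⟨v, hv⟩ := toland_fin (g x0) (hnb x0) hx0
  have h1 : ((w ⬝ᵥ x0 - v : ℝ) : EReal) ≤ fenchelConj g w := by
    have := le_iSup (fun x => ((w ⬝ᵥ x : ℝ) : EReal) - g x) x0
    rwa [hv, ← EReal.coe_sub] at this
  exact fun hb => by rw [hb, le_bot_iff] at h1; exact (EReal.coe_ne_bot _) h1

lemma toland_conj_le {n : ℕ} (g : (Fin n → ℝ) → EReal) (gprop : ProperFn g)
    {w : Fin n → ℝ} {c : ℝ} (h : ∀ x, ((w ⬝ᵥ x - c : ℝ) : EReal) ≤ g x) :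
    fenchelConj g w ≤ (c : EReal) := by
  apply iSup_le
  intro x
  by_cases hx : g x = ⊤
  · rw [hx, EReal.sub_top]; exact bot_le
  · obtain ⟨v, hv⟩ := toland_fin (g x) (gprop.1 x) hx
    rw [hv, ← EReal.coe_sub, EReal.coe_le_coe_iff]
    have := h x
    rw [hv, EReal.coe_le_coe_iff] at this
    linarith

def tolandEpi {n : ℕ} (g : (Fin n → ℝ) → EReal) : Set ((Fin n → ℝ) × ℝ) :=
  {p | g p.1 ≤ (p.2 : EReal)}

lemma toland_epi_convex {n : ℕ} (g : (Fin n → ℝ) → EReal) (gprop : ProperFn g)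
    (gconv : ConvexFn g) : Convex ℝ (tolandEpi g) := by
  rintro p hp q hq a b ha hb hab
  simp only [tolandEpi, Set.mem_setOf_eq] at hp hq ⊢
  have hp' : g p.1 ≠ ⊤ := fun h => by rw [h] at hp; exact absurd hp (by simp)
  have hq' : g q.1 ≠ ⊤ := fun h => by rw [h] at hq; exact absurd hq (by simp)
  obtain ⟨v, hv⟩ := toland_fin _ (gprop.1 p.1) hp'
  obtain ⟨u, hu⟩ := toland_fin _ (gprop.1 q.1) hq'
  rw [hv, EReal.coe_le_coe_iff] at hp
  rw [hu, EReal.coe_le_coe_iff] at hq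
  have h1 : (a • p + b • q).1 = a • p.1 + b • q.1 := rfl
  have h2 : (a • p + b • q).2 = a * p.2 + b * q.2 := rfl
  rw [h1, h2]
  calc g (a • p.1 + b • q.1) ≤ (a : EReal) * g p.1 + (b : EReal) * g q.1 :=
        gconv p.1 q.1 a b ha hb hab
    _ = ((a * v + b * u : ℝ) : EReal) := by
        rw [hv, hu, ← EReal.coe_mul, ← EReal.coe_mul, ← EReal.coe_add]
    _ ≤ ((a * p.2 + b * q.2 : ℝ) : EReal) := by
        rw [EReal.coe_le_coe_iff]
        have := mul_le_mul_of_nonneg_left hp ha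
        have := mul_le_mul_of_nonneg_left hq hb
        linarith

lemma toland_epi_closed {n : ℕ} (g : (Fin n → ℝ) → EReal)
    (glsc : LowerSemicontinuous g) : IsClosed (tolandEpi g) := by
  rw [← isOpen_compl_iff, isOpen_iff_mem_nhds]
  rintro ⟨x, t⟩ hp
  simp only [Set.mem_compl_iff, tolandEpi, Set.mem_setOf_eq, not_le] at hp
  obtain ⟨q, hq1, hq2⟩ := EReal.lt_iff_exists_real_btwn.1 hp
  have hU : {y | (q : EReal) < g y} ∈ nhds x := glsc x _ hq2
  have hV : {s : ℝ | s < q} ∈ nhds t :=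
    isOpen_Iio.mem_nhds (EReal.coe_lt_coe_iff.1 hq1)
  have hprod : {y | (q : EReal) < g y} ×ˢ {s : ℝ | s < q} ∈ nhds (x, t) := by
    rw [nhds_prod_eq]; exact Filter.prod_mem_prod hU hV
  refine Filter.mem_of_superset hprod ?_
  rintro ⟨y, s⟩ ⟨hy, hs⟩
  simp only [Set.mem_compl_iff, tolandEpi, Set.mem_setOf_eq, not_le]
  exact lt_trans (EReal.coe_lt_coe_iff.2 hs) hy

lemma toland_clm_decomp {n : ℕ} (f : ((Fin n → ℝ) × ℝ) →L[ℝ] ℝ) :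
    ∃ (w0 : Fin n → ℝ) (s : ℝ), ∀ (x : Fin n → ℝ) (t : ℝ),
      f (x, t) = w0 ⬝ᵥ x + t * s := by
  refine ⟨fun i => f (Pi.single i 1, 0), f (0, 1), fun x t => ?_⟩
  have hxt : (x, t) = (x, (0:ℝ)) + t • ((0 : Fin n → ℝ), (1:ℝ)) := by
    simp [Prod.ext_iff]
  rw [hxt, map_add, _root_.map_smul]
  have hx : (x, (0:ℝ)) = ∑ i, x i • ((Pi.single i 1 : Fin n → ℝ), (0:ℝ)) := by
    rw [Prod.ext_iff]
    constructor
    · simp only [Prod.fst_sum]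
      funext j
      simp [Finset.sum_apply, Pi.single_apply, mul_comm]
    · rw [Prod.snd_sum]; simp
  rw [hx, map_sum]
  simp only [_root_.map_smul, smul_eq_mul]
  rw [dotProduct]
  congr 1
  exact Finset.sum_congr rfl fun i _ => mul_comm _ _

lemma toland_sep {n : ℕ} (g : (Fin n → ℝ) → EReal) (gprop : ProperFn g)
    (gconv : ConvexFn g) (glsc : LowerSemicontinuous g)
    {x1 : Fin n → ℝ} {t1 : ℝ} (h : (t1 : EReal) < g x1) :
    ∃ (w0 : Fin n → ℝ) (s u : ℝ), w0 ⬝ᵥ x1 + t1 * s < u ∧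
      (∀ (x : Fin n → ℝ) (t : ℝ), g x ≤ (t : EReal) → u < w0 ⬝ᵥ x + t * s) ∧ 0 ≤ s := by
  have hmem : (x1, t1) ∉ tolandEpi g := fun hm => absurd hm (not_le.2 h)
  obtain ⟨f, u, hfu, hsep⟩ := geometric_hahn_banach_point_closed
    (toland_epi_convex g gprop gconv) (toland_epi_closed g glsc) hmem
  obtain ⟨w0, s, hdec⟩ := toland_clm_decomp f
  refine ⟨w0, s, u, by rwa [hdec] at hfu, fun x t ht => ?_, ?_⟩
  · have := hsep (x, t) ht
    rwa [hdec] at this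
  · by_contra hs
    push_neg at hs
    obtain ⟨hnb, x0, hx0⟩ := gprop
    obtain ⟨v0, hv0⟩ := toland_fin _ (hnb x0) hx0
    set A := u - w0 ⬝ᵥ x0 - v0 * s with hA
    set m := max 0 (A / s + 1) with hm
    have hm0 : (0:ℝ) ≤ m := le_max_left _ _
    have hmA : A / s < m := lt_of_lt_of_le (by linarith) (le_max_right _ _)
    have hms : m * s < A := by
      have := (div_lt_iff_of_neg hs).1 hmA
      linarith
    have hmem2 : g x0 ≤ ((v0 + m : ℝ) : EReal) := by
      rw [hv0, EReal.coe_le_coe_iff]; linarith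
    have h2 := hsep (x0, v0 + m) hmem2
    rw [hdec] at h2
    nlinarith

lemma toland_affine_minorant {n : ℕ} (g : (Fin n → ℝ) → EReal) (gprop : ProperFn g)
    (gconv : ConvexFn g) (glsc : LowerSemicontinuous g) :
    ∃ (w : Fin n → ℝ) (c : ℝ), ∀ x, ((w ⬝ᵥ x - c : ℝ) : EReal) ≤ g x := by
  obtain ⟨hnb, x0, hx0⟩ := id gprop
  obtain ⟨v0, hv0⟩ := toland_fin _ (hnb x0) hx0
  have hlt : ((v0 - 1 : ℝ) : EReal) < g x0 := by
    rw [hv0, EReal.coe_lt_coe_iff]; linarith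
  obtain ⟨w0, s, u, h1, h2, _⟩ := toland_sep g gprop gconv glsc hlt
  have h3 : u < w0 ⬝ᵥ x0 + v0 * s := h2 x0 v0 (le_of_eq hv0)
  have hs : 0 < s := by nlinarith
  refine ⟨(1 / s) • (-w0), -u / s, fun x => ?_⟩
  by_cases hx : g x = ⊤
  · rw [hx]; exact le_top
  · obtain ⟨v, hv⟩ := toland_fin _ (hnb x) hx
    rw [hv, EReal.coe_le_coe_iff]
    have h4 := h2 x v (le_of_eq hv)
    rw [smul_dotProduct, neg_dotProduct, smul_eq_mul,
      show 1 / s * -(w0 ⬝ᵥ x) - -u / s = (u - w0 ⬝ᵥ x) / s by field_simp; ring,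
      div_le_iff₀ hs]
    nlinarith

lemma toland_minorant {n : ℕ} (g : (Fin n → ℝ) → EReal) (gprop : ProperFn g)
    (gconv : ConvexFn g) (glsc : LowerSemicontinuous g)
    (z : Fin n → ℝ) (r : ℝ) (hr : (r : EReal) < g z) :
    ∃ (w : Fin n → ℝ) (c : ℝ), (∀ x, ((w ⬝ᵥ x - c : ℝ) : EReal) ≤ g x) ∧
      r < w ⬝ᵥ z - c := by
  obtain ⟨w0, s, u, h1, h2, hs0⟩ := toland_sep g gprop gconv glsc hr
  rcases hs0.lt_or_eq with hs | hs
  · refine ⟨(1 / s) • (-w0), -u / s, fun x => ?_, ?_⟩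
    · by_cases hx : g x = ⊤
      · rw [hx]; exact le_top
      · obtain ⟨v, hv⟩ := toland_fin _ (gprop.1 x) hx
        rw [hv, EReal.coe_le_coe_iff]
        have h4 := h2 x v (le_of_eq hv)
        rw [smul_dotProduct, neg_dotProduct, smul_eq_mul,
          show 1 / s * -(w0 ⬝ᵥ x) - -u / s = (u - w0 ⬝ᵥ x) / s by field_simp; ring,
          div_le_iff₀ hs]
        nlinarith
    · rw [smul_dotProduct, neg_dotProduct, smul_eq_mul,
        show 1 / s * -(w0 ⬝ᵥ z) - -u / s = (u - w0 ⬝ᵥ z) / s by field_simp; ring,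
        lt_div_iff₀ hs]
      nlinarith
  · subst hs
    obtain ⟨wa, ca, hwa⟩ := toland_affine_minorant g gprop gconv glsc
    simp only [mul_zero, add_zero] at h1 h2
    set e := u - w0 ⬝ᵥ z with he
    have he0 : 0 < e := by linarith
    set l := max 0 ((r - (wa ⬝ᵥ z - ca)) / e + 1) with hl
    have hl0 : (0:ℝ) ≤ l := le_max_left _ _
    have hle : (r - (wa ⬝ᵥ z - ca)) / e < l :=
      lt_of_lt_of_le (by linarith) (le_max_right _ _)
    have hre : r - (wa ⬝ᵥ z - ca) < l * e := by
      rw [div_lt_iff₀ he0] at hle; linarith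
    refine ⟨wa + l • (-w0), ca - l * u, fun x => ?_, ?_⟩
    · by_cases hx : g x = ⊤
      · rw [hx]; exact le_top
      · obtain ⟨v, hv⟩ := toland_fin _ (gprop.1 x) hx
        rw [hv, EReal.coe_le_coe_iff]
        have h4 := h2 x v (le_of_eq hv)
        have h5 := hwa x
        rw [hv, EReal.coe_le_coe_iff] at h5
        rw [add_dotProduct, smul_dotProduct, neg_dotProduct, smul_eq_mul]
        nlinarith [mul_nonpos_of_nonneg_of_nonpos hl0 (by linarith : u - w0 ⬝ᵥ x ≤ 0)]
    · rw [add_dotProduct, smul_dotProduct, neg_dotProduct, smul_eq_mul]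
      have hle2 : l * e = l * u - l * (w0 ⬝ᵥ z) := by rw [he]; ring
      linarith

/-- Toland duality: for proper convex lsc `h̃, g̃`,
`inf_{z ∈ dom h̃} h̃(z) − g̃(z) = inf_{w ∈ dom g̃*} g̃*(w) − h̃*(w)`,
an equality in the extended reals. -/
theorem stmt11 {n : ℕ} (htilde gtilde : (Fin n → ℝ) → EReal)
    (hproper : ProperFn htilde) (gproper : ProperFn gtilde)
    (hconv : ConvexFn htilde) (gconv : ConvexFn gtilde)
    (hlsc : LowerSemicontinuous htilde) (glsc : LowerSemicontinuous gtilde) :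
    (⨅ (z : Fin n → ℝ) (_ : htilde z ≠ ⊤), htilde z - gtilde z)
      = ⨅ (w : Fin n → ℝ) (_ : fenchelConj gtilde w ≠ ⊤),
          fenchelConj gtilde w - fenchelConj htilde w := by
  apply le_antisymm
  · refine le_iInf fun w => le_iInf fun hw => ?_
    obtain ⟨cg, hcg⟩ := toland_fin _ (toland_conj_ne_bot gtilde gproper w) hw
    have step : ∀ (z : Fin n → ℝ) (hz' : ℝ), htilde z = (hz' : EReal) →
        (⨅ (z : Fin n → ℝ) (_ : htilde z ≠ ⊤), htilde z - gtilde z)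
          ≤ ((hz' - w ⬝ᵥ z + cg : ℝ) : EReal) := by
      intro z hz' hzeq
      have hzt : htilde z ≠ ⊤ := by rw [hzeq]; exact EReal.coe_ne_top _
      refine le_trans (iInf₂_le z hzt) ?_
      by_cases hgz : gtilde z = ⊤
      · rw [hgz, EReal.sub_top]; exact bot_le
      · obtain ⟨gz', hgz'⟩ := toland_fin _ (gproper.1 z) hgz
        have hterm : ((w ⬝ᵥ z : ℝ) : EReal) - gtilde z ≤ fenchelConj gtilde w :=
          le_iSup (fun x => ((w ⬝ᵥ x : ℝ) : EReal) - gtilde x) z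
        rw [hgz', hcg, ← EReal.coe_sub, EReal.coe_le_coe_iff] at hterm
        rw [hzeq, hgz', ← EReal.coe_sub, EReal.coe_le_coe_iff]
        linarith
    by_cases hhw : fenchelConj htilde w = ⊤
    · rw [hhw, EReal.sub_top, le_bot_iff]
      apply toland_eq_bot
      intro M
      have hK : ((cg - M : ℝ) : EReal) < fenchelConj htilde w := by
        rw [hhw]; exact EReal.coe_lt_top _
      rw [fenchelConj, lt_iSup_iff] at hK
      obtain ⟨z, hz⟩ := hK
      have hzt : htilde z ≠ ⊤ := by
        intro h; rw [h, EReal.sub_top] at hz; exact absurd hz (by simp)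
      obtain ⟨hz', hzeq⟩ := toland_fin _ (hproper.1 z) hzt
      rw [hzeq, ← EReal.coe_sub, EReal.coe_lt_coe_iff] at hz
      refine le_trans (step z hz' hzeq) ?_
      rw [EReal.coe_le_coe_iff]; linarith
    · obtain ⟨ch, hch⟩ := toland_fin _ (toland_conj_ne_bot htilde hproper w) hhw
      rw [hcg, hch, ← EReal.coe_sub]
      apply toland_le_of_eps
      intro ε hε
      have hK : ((ch - ε : ℝ) : EReal) < fenchelConj htilde w := by
        rw [hch, EReal.coe_lt_coe_iff]; linarith
      rw [fenchelConj, lt_iSup_iff] at hK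
      obtain ⟨z, hz⟩ := hK
      have hzt : htilde z ≠ ⊤ := by
        intro h; rw [h, EReal.sub_top] at hz; exact absurd hz (by simp)
      obtain ⟨hz', hzeq⟩ := toland_fin _ (hproper.1 z) hzt
      rw [hzeq, ← EReal.coe_sub, EReal.coe_lt_coe_iff] at hz
      refine le_trans (step z hz' hzeq) ?_
      rw [EReal.coe_le_coe_iff]; linarith
  · refine le_iInf fun z => le_iInf fun hz => ?_
    obtain ⟨hz', hzeq⟩ := toland_fin _ (hproper.1 z) hz
    have key : ∀ r : ℝ, (r : EReal) < gtilde z →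
        (⨅ (w : Fin n → ℝ) (_ : fenchelConj gtilde w ≠ ⊤),
            fenchelConj gtilde w - fenchelConj htilde w)
          ≤ ((hz' - r : ℝ) : EReal) := by
      intro r hr
      obtain ⟨w, c, hmin, hrz⟩ := toland_minorant gtilde gproper gconv glsc z r hr
      have hgw_le : fenchelConj gtilde w ≤ (c : EReal) := toland_conj_le gtilde gproper hmin
      have hgw_ne : fenchelConj gtilde w ≠ ⊤ := fun h => by
        rw [h] at hgw_le; exact EReal.coe_ne_top c (top_le_iff.1 hgw_le)
      refine le_trans (iInf₂_le w hgw_ne) ?_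
      obtain ⟨cg, hcg⟩ := toland_fin _ (toland_conj_ne_bot gtilde gproper w) hgw_ne
      by_cases hhw : fenchelConj htilde w = ⊤
      · rw [hcg, hhw, EReal.sub_top]; exact bot_le
      · obtain ⟨ch, hch⟩ := toland_fin _ (toland_conj_ne_bot htilde hproper w) hhw
        rw [hcg, hch, ← EReal.coe_sub, EReal.coe_le_coe_iff]
        have h5 : ((w ⬝ᵥ z : ℝ) : EReal) - htilde z ≤ fenchelConj htilde w :=
          le_iSup (fun x => ((w ⬝ᵥ x : ℝ) : EReal) - htilde x) z
        rw [hzeq, hch, ← EReal.coe_sub, EReal.coe_le_coe_iff] at h5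
        have h6 : cg ≤ c := by rw [hcg, EReal.coe_le_coe_iff] at hgw_le; exact hgw_le
        linarith
    rw [hzeq]
    by_cases hgz : gtilde z = ⊤
    · rw [hgz, EReal.sub_top, le_bot_iff]
      apply toland_eq_bot
      intro M
      have h7 := key (hz' - M) (by rw [hgz]; exact EReal.coe_lt_top _)
      rw [show hz' - (hz' - M) = M by ring] at h7
      exact h7
    · obtain ⟨gz', hgzeq⟩ := toland_fin _ (gproper.1 z) hgz
      rw [hgzeq, ← EReal.coe_sub]
      apply toland_le_of_eps
      intro ε hε
      have h7 := key (gz' - ε) (by rw [hgzeq, EReal.coe_lt_coe_iff]; linarith)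
      refine le_trans h7 ?_
      rw [EReal.coe_le_coe_iff]; linarith
end
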